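/- arXiv:1407.0887 — 2 statements merged into one kernel-verified Lean document; each statement's English description precedes it below -/
import Mathlib

section
/- Let m = 1 and consider the implicit scheme (θ = 1). Assume hypothesis (fmy) holds with l^Y ≥ 0, hypothesis (fLz) holds with constant L^Z, each H_i is essentially bounded, and h · L^Z · max_{0 ≤ i ≤ n−1} ‖ |H_i| ‖_∞ ≤ 1. Then for every essentially bounded terminal condition ξ and every 0 ≤ i ≤ n, |Y_i| ≤ ‖ξ‖_∞ almost surely; in particular |Y_0| ≤ ‖ξ‖_∞ almost surely. -/
/-!
A step of the scheme reads `Y_i = E[Y_{i+1} | F_i] + h f(Y_i, Z_i)`. Writing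
`f(y, z) = f(y, 0) + ⟪β, z⟫` with an `F_i`-measurable `β`, `‖β‖ ≤ L^Z`, and pulling `β` into
`Z_i = E[Y_{i+1} H_i | F_i]` gives `Y_i = E[Y_{i+1} G | F_i] + h f(Y_i, 0)` with the weight
`G = 1 + h ⟪β, H_i⟫`. The stability condition makes `G ≥ 0` and `E[H_i | F_i] = 0` gives
`E[G | F_i] = 1`, so `|E[Y_{i+1} G | F_i]| ≤ ‖ξ‖_∞` by backward induction. Monotonicity in `y`
gives `Y_i f(Y_i, 0) ≤ 0`, whence `Y_i² ≤ |Y_i| ‖ξ‖_∞`.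
-/

open MeasureTheory
open scoped InnerProductSpace

section LinearCoeff

variable {E : Type*} [NormedAddCommGroup E] [InnerProductSpace ℝ E]

open Classical in
noncomputable def linearCoeff (f : ℝ → E → ℝ) (y : ℝ) (z : E) : E :=
  if z = 0 then 0 else ((f y z - f y 0) / ‖z‖ ^ 2) • z

theorem inner_linearCoeff (f : ℝ → E → ℝ) (y : ℝ) (z : E) :
    ⟪linearCoeff f y z, z⟫_ℝ = f y z - f y 0 := by
  by_cases hz : z = 0
  · simp [linearCoeff, hz]
  · have : ‖z‖ ≠ 0 := norm_ne_zero_iff.mpr hz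
    rw [linearCoeff, if_neg hz, real_inner_smul_left, real_inner_self_eq_norm_sq]
    field_simp

theorem norm_linearCoeff_le {f : ℝ → E → ℝ} {L : ℝ} (hL : 0 ≤ L)
    (hf : ∀ y z z', |f y z - f y z'| ≤ L * ‖z - z'‖) (y : ℝ) (z : E) :
    ‖linearCoeff f y z‖ ≤ L := by
  by_cases hz : z = 0
  · simpa [linearCoeff, hz] using hL
  · have hz' : 0 < ‖z‖ := norm_pos_iff.mpr hz
    have hfz : |f y z - f y 0| ≤ L * ‖z‖ := by simpa using hf y z 0
    rw [linearCoeff, if_neg hz, norm_smul, norm_div, norm_pow, norm_norm, Real.norm_eq_abs,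
      div_mul_eq_mul_div, div_le_iff₀ (by positivity)]
    nlinarith

theorem measurable_linearCoeff [MeasurableSpace E] [BorelSpace E] [SecondCountableTopology E]
    {f : ℝ → E → ℝ} (hf : Continuous fun p : ℝ × E => f p.1 p.2) :
    Measurable fun p : ℝ × E => linearCoeff f p.1 p.2 := by
  have hf0 : Continuous fun p : ℝ × E => f p.1 0 :=
    hf.comp (continuous_fst.prodMk continuous_const)
  refine Measurable.ite (measurable_snd (measurableSet_singleton 0)) measurable_const ?_
  exact ((hf.measurable.sub hf0.measurable).div (measurable_snd.norm.pow_const 2)).smul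
    measurable_snd

end LinearCoeff

theorem mul_apply_zero_nonpos {E : Type*} [Zero E] {f : ℝ → E → ℝ} (hf0 : f 0 0 = 0) {lY : ℝ}
    (hlY : 0 ≤ lY) (hfmy : ∀ y y' z, (y - y') * (f y z - f y' z) ≤ -lY * |y - y'| ^ 2) (y : ℝ) :
    y * f y 0 ≤ 0 := by
  have := hfmy y 0 0
  rw [hf0, sub_zero, sub_zero] at this
  nlinarith [sq_nonneg |y|]

theorem abs_le_of_eq_add_mul_of_mul_nonpos {y a h g M : ℝ} (hy : y = a + h * g) (ha : |a| ≤ M)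
    (hh : 0 ≤ h) (hyg : y * g ≤ 0) : |y| ≤ M := by
  have hsq : |y| * |y| ≤ |y| * M := by
    calc |y| * |y| = y * a + h * (y * g) := by rw [abs_mul_abs_self, hy]; ring
      _ ≤ |y| * |a| := by
        rw [← abs_mul]
        linarith [le_abs_self (y * a), mul_nonpos_of_nonneg_of_nonpos hh hyg]
      _ ≤ |y| * M := mul_le_mul_of_nonneg_left ha (abs_nonneg y)
  rcases (abs_nonneg y).eq_or_lt with hy0 | hy0
  · rw [← hy0]; exact (abs_nonneg a).trans ha
  · exact le_of_mul_le_mul_left hsq hy0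

theorem mul_mul_le_ciSup_mul_mul_ciSup {ι : Type*} [Finite ι] {a b : ι → ℝ} {K : ℝ}
    (ha : ∀ i, 0 ≤ a i) (hb : ∀ i, 0 ≤ b i) (hK : 0 ≤ K) (i : ι) :
    a i * K * b i ≤ (⨆ j, a j) * K * ⨆ j, b j := by
  have hai := le_ciSup (Set.finite_range a).bddAbove i
  have hbi := le_ciSup (Set.finite_range b).bddAbove i
  have := mul_nonneg ((ha i).trans hai) hK
  have := hb i
  gcongr

section CondExp

variable {Ω : Type*} {m m₀ : MeasurableSpace Ω} {μ : Measure Ω}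

theorem ae_abs_condExp_mul_le {X G : Ω → ℝ} {M : ℝ} (hXG : Integrable (fun ω => X ω * G ω) μ)
    (hG : Integrable G μ) (hXM : ∀ᵐ ω ∂μ, |X ω| ≤ M) (hG_nonneg : ∀ᵐ ω ∂μ, 0 ≤ G ω)
    (hG_one : μ[G|m] =ᵐ[μ] 1) :
    ∀ᵐ ω ∂μ, |μ[fun ω => X ω * G ω|m] ω| ≤ M := by
  have hMG (c : ℝ) : μ[fun ω => c * G ω|m] =ᵐ[μ] fun _ => c := by
    filter_upwards [condExp_smul (μ := μ) c G m, hG_one] with ω h1 h2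
    change μ[c • G|m] ω = c
    simp [h1, h2]
  have hle : μ[fun ω => X ω * G ω|m] ≤ᵐ[μ] μ[fun ω => M * G ω|m] := by
    refine condExp_mono hXG (hG.const_mul M) ?_
    filter_upwards [hXM, hG_nonneg] with ω h1 h2
    exact mul_le_mul_of_nonneg_right (abs_le.mp h1).2 h2
  have hge : μ[fun ω => -M * G ω|m] ≤ᵐ[μ] μ[fun ω => X ω * G ω|m] := by
    refine condExp_mono (hG.const_mul (-M)) hXG ?_
    filter_upwards [hXM, hG_nonneg] with ω h1 h2
    exact mul_le_mul_of_nonneg_right (abs_le.mp h1).1 h2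
  filter_upwards [hle, hge, hMG M, hMG (-M)] with ω h1 h2 h3 h4
  exact abs_le.mpr ⟨h4 ▸ h2, h3 ▸ h1⟩

theorem condExp_add_of_aestronglyMeasurable_right {F : Type*} [NormedAddCommGroup F]
    [NormedSpace ℝ F] [CompleteSpace F] (hm : m ≤ m₀) [SigmaFinite (μ.trim hm)] {X W : Ω → F}
    (hX : Integrable X μ) (hW : Integrable W μ) (hWm : AEStronglyMeasurable[m] W μ) :
    μ[fun ω => X ω + W ω|m] =ᵐ[μ] fun ω => μ[X|m] ω + W ω := by
  filter_upwards [condExp_add hX hW m, condExp_of_aestronglyMeasurable' hm hWm hW] with ω h1 h2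
  rw [← h2]
  exact h1

variable {E : Type*} [NormedAddCommGroup E] [InnerProductSpace ℝ E]

theorem MeasureTheory.Integrable.inner_of_norm_le_left {β V : Ω → E} {L : ℝ}
    (hV : Integrable V μ) (hβ : AEStronglyMeasurable β μ) (hβL : ∀ ω, ‖β ω‖ ≤ L) :
    Integrable (fun ω => ⟪β ω, V ω⟫_ℝ) μ := by
  refine Integrable.mono' (hV.norm.const_mul L) (hβ.inner hV.1) (ae_of_all _ fun ω => ?_)
  calc ‖⟪β ω, V ω⟫_ℝ‖ ≤ ‖β ω‖ * ‖V ω‖ := norm_inner_le_norm _ _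
    _ ≤ L * ‖V ω‖ := mul_le_mul_of_nonneg_right (hβL ω) (norm_nonneg _)

theorem condExp_inner_of_stronglyMeasurable_left [CompleteSpace E] (hm : m ≤ m₀)
    {β V : Ω → E} {L : ℝ} (hβ : StronglyMeasurable[m] β) (hβL : ∀ ω, ‖β ω‖ ≤ L)
    (hV : Integrable V μ) :
    μ[fun ω => ⟪β ω, V ω⟫_ℝ|m] =ᵐ[μ] fun ω => ⟪β ω, μ[V|m] ω⟫_ℝ :=
  condExp_bilin_of_stronglyMeasurable_left (innerSL ℝ) hβ
    (hV.inner_of_norm_le_left (hβ.mono hm).aestronglyMeasurable hβL) hV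

theorem ae_abs_condExp_mul_one_add_inner_le [CompleteSpace E] (hm : m ≤ m₀) [IsFiniteMeasure μ]
    {h L C M : ℝ} (hh : 0 ≤ h) (hL : 0 ≤ L) (hcond : h * L * C ≤ 1) {β H : Ω → E}
    (hβ : StronglyMeasurable[m] β) (hβL : ∀ ω, ‖β ω‖ ≤ L) (hH : Integrable H μ)
    (hHC : ∀ᵐ ω ∂μ, ‖H ω‖ ≤ C) (hH_mean : μ[H|m] =ᵐ[μ] 0) {X : Ω → ℝ} (hX : Integrable X μ)
    (hXM : ∀ᵐ ω ∂μ, |X ω| ≤ M) :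
    ∀ᵐ ω ∂μ, |μ[fun ω => X ω * (1 + h * ⟪β ω, H ω⟫_ℝ)|m] ω| ≤ M := by
  have hβH := hH.inner_of_norm_le_left (hβ.mono hm).aestronglyMeasurable hβL
  have hG := (integrable_const 1).add (hβH.const_mul h)
  have hβH_le : ∀ᵐ ω ∂μ, |h * ⟪β ω, H ω⟫_ℝ| ≤ 1 := by
    filter_upwards [hHC] with ω hω
    calc |h * ⟪β ω, H ω⟫_ℝ| ≤ h * (‖β ω‖ * ‖H ω‖) := by
          rw [abs_mul, abs_of_nonneg hh]
          exact mul_le_mul_of_nonneg_left (abs_real_inner_le_norm _ _) hh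
      _ ≤ h * L * C := by
          rw [mul_assoc]
          exact mul_le_mul_of_nonneg_left (mul_le_mul (hβL ω) hω (norm_nonneg _) hL) hh
      _ ≤ 1 := hcond
  have hG_nonneg : ∀ᵐ ω ∂μ, 0 ≤ 1 + h * ⟪β ω, H ω⟫_ℝ := by
    filter_upwards [hβH_le] with ω hω
    linarith [(abs_le.mp hω).1]
  have hG_one : μ[fun ω => 1 + h * ⟪β ω, H ω⟫_ℝ|m] =ᵐ[μ] 1 := by
    filter_upwards [condExp_add (integrable_const (1 : ℝ)) (hβH.const_mul h) m,
      condExp_smul (μ := μ) h (fun ω => ⟪β ω, H ω⟫_ℝ) m,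
      condExp_inner_of_stronglyMeasurable_left hm hβ hβL hH, hH_mean] with ω h1 h2 h3 h4
    change μ[fun ω => 1 + h * ⟪β ω, H ω⟫_ℝ|m] ω
      = μ[fun _ => (1 : ℝ)|m] ω + μ[fun ω => h * ⟪β ω, H ω⟫_ℝ|m] ω at h1
    change μ[fun ω => h * ⟪β ω, H ω⟫_ℝ|m] ω = h * μ[fun ω => ⟪β ω, H ω⟫_ℝ|m] ω at h2
    rw [h1, h2, h3, h4, condExp_const hm]
    simp
  have hXG : Integrable (fun ω => X ω * (1 + h * ⟪β ω, H ω⟫_ℝ)) μ := by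
    refine hX.mul_bdd (c := 2) hG.1 ?_
    filter_upwards [hβH_le] with ω hω
    rw [Real.norm_eq_abs]
    linarith [abs_add_le 1 (h * ⟪β ω, H ω⟫_ℝ), abs_one (α := ℝ)]
  exact ae_abs_condExp_mul_le hXG hG hXM hG_nonneg hG_one

end CondExp

theorem EuclideanSpace.ae_eq_condExp_of_forall_apply {Ω ι : Type*} [Fintype ι]
    {m m₀ : MeasurableSpace Ω} {μ : Measure Ω} {Z V : Ω → EuclideanSpace ℝ ι}
    (hV : Integrable V μ) (hZ : ∀ l, (fun ω => Z ω l) =ᵐ[μ] μ[fun ω => V ω l|m]) :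
    Z =ᵐ[μ] μ[V|m] := by
  have hcoord (l : ι) : (fun ω => Z ω l) =ᵐ[μ] fun ω => μ[V|m] ω l :=
    (hZ l).trans ((EuclideanSpace.proj l).comp_condExp_comm hV).symm
  filter_upwards [ae_all_iff.mpr hcoord] with ω hω
  exact PiLp.ext hω

theorem MeasureTheory.MemLp.ae_norm_le_toReal_eLpNorm_top {Ω E : Type*} {m : MeasurableSpace Ω}
    {μ : Measure Ω} [NormedAddCommGroup E] {f : Ω → E} (hf : MemLp f ⊤ μ) :
    ∀ᵐ ω ∂μ, ‖f ω‖ ≤ (eLpNorm f ⊤ μ).toReal := by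
  simpa only [toReal_eLpNorm hf.1] using ae_le_lpNorm_exponent_top hf

section Step

variable {Ω E : Type*} {m m₀ : MeasurableSpace Ω} {μ : Measure Ω}
  [NormedAddCommGroup E] [InnerProductSpace ℝ E] [CompleteSpace E]
  [MeasurableSpace E] [BorelSpace E] [SecondCountableTopology E]

theorem exists_implicit_step_eq_condExp_weighted_add (hm : m ≤ m₀) [IsFiniteMeasure μ]
    {f : ℝ → E → ℝ} (hf : Continuous fun p : ℝ × E => f p.1 p.2) {L : ℝ} (hL : 0 ≤ L)
    (hfLz : ∀ y z z', |f y z - f y z'| ≤ L * ‖z - z'‖) {h : ℝ} {Y₁ Y₀ : Ω → ℝ} {Z H : Ω → E}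
    (hY₁ : Integrable Y₁ μ) (hY₁H : Integrable (fun ω => Y₁ ω • H ω) μ)
    (hZ : Z =ᵐ[μ] μ[fun ω => Y₁ ω • H ω|m])
    (hInt : Integrable (fun ω => Y₁ ω + h * f (Y₀ ω) (Z ω)) μ)
    (hY₀ : Y₀ =ᵐ[μ] μ[fun ω => Y₁ ω + h * f (Y₀ ω) (Z ω)|m]) :
    ∃ β : Ω → E, StronglyMeasurable[m] β ∧ (∀ ω, ‖β ω‖ ≤ L) ∧
      Y₀ =ᵐ[μ] fun ω => μ[fun ω => Y₁ ω * (1 + h * ⟪β ω, H ω⟫_ℝ)|m] ω + h * f (Y₀ ω) 0 := by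
  obtain ⟨Yₘ, hYₘ, hY₀Yₘ⟩ : AEStronglyMeasurable[m] Y₀ μ :=
    stronglyMeasurable_condExp.aestronglyMeasurable.congr hY₀.symm
  set Zₘ := μ[fun ω => Y₁ ω • H ω|m]
  have hYₘZₘ : Measurable[m] fun ω => (Yₘ ω, Zₘ ω) :=
    hYₘ.measurable.prodMk stronglyMeasurable_condExp.measurable
  set β : Ω → E := fun ω => linearCoeff f (Yₘ ω) (Zₘ ω)
  have hβ : StronglyMeasurable[m] β := ((measurable_linearCoeff hf).comp hYₘZₘ).stronglyMeasurable
  have hβL (ω : Ω) : ‖β ω‖ ≤ L := norm_linearCoeff_le hL hfLz _ _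
  refine ⟨β, hβ, hβL, ?_⟩
  have hdrv_meas : AEStronglyMeasurable[m] (fun ω => h * f (Y₀ ω) (Z ω)) μ := by
    refine ⟨_, ((hf.measurable.comp hYₘZₘ).const_mul h).stronglyMeasurable, ?_⟩
    filter_upwards [hY₀Yₘ, hZ] with ω h1 h2
    rw [h1, h2, Function.comp_apply]
  have hsplit := condExp_add_of_aestronglyMeasurable_right hm hY₁
    ((hInt.sub hY₁).congr (.of_forall fun ω => by simp)) hdrv_meas
  have hweight : μ[fun ω => Y₁ ω * (1 + h * ⟪β ω, H ω⟫_ℝ)|m]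
      =ᵐ[μ] fun ω => μ[Y₁|m] ω + h * ⟪β ω, Zₘ ω⟫_ℝ := by
    have hexp : (fun ω => Y₁ ω * (1 + h * ⟪β ω, H ω⟫_ℝ))
        = fun ω => Y₁ ω + h * ⟪β ω, Y₁ ω • H ω⟫_ℝ := by
      funext ω
      rw [real_inner_smul_right]
      ring
    have hint := hY₁H.inner_of_norm_le_left (hβ.mono hm).aestronglyMeasurable hβL
    rw [hexp]
    filter_upwards [condExp_add hY₁ (hint.const_mul h) m,
      condExp_smul (μ := μ) h (fun ω => ⟪β ω, Y₁ ω • H ω⟫_ℝ) m,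
      condExp_inner_of_stronglyMeasurable_left hm hβ hβL hY₁H] with ω h1 h2 h3
    change μ[fun ω => h * ⟪β ω, Y₁ ω • H ω⟫_ℝ|m] ω
      = h * μ[fun ω => ⟪β ω, Y₁ ω • H ω⟫_ℝ|m] ω at h2
    rw [← h3, ← h2]
    exact h1
  have hβZ (ω : Ω) : ⟪β ω, Zₘ ω⟫_ℝ = f (Yₘ ω) (Zₘ ω) - f (Yₘ ω) 0 := inner_linearCoeff f _ _
  filter_upwards [hY₀, hsplit, hweight, hY₀Yₘ, hZ] with ω h1 h2 h3 h4 h5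
  calc Y₀ ω = μ[Y₁|m] ω + h * f (Y₀ ω) (Z ω) := h1.trans h2
    _ = μ[Y₁|m] ω + h * ⟪β ω, Zₘ ω⟫_ℝ + h * f (Y₀ ω) 0 := by rw [hβZ, h4, h5]; ring
    _ = _ := by rw [h3]

theorem ae_abs_le_of_implicit_step (hm : m ≤ m₀) [IsFiniteMeasure μ] {f : ℝ → E → ℝ}
    (hf : Continuous fun p : ℝ × E => f p.1 p.2) (hf0 : f 0 0 = 0) {lY L : ℝ}
    (hlY : 0 ≤ lY) (hL : 0 ≤ L)
    (hfmy : ∀ y y' z, (y - y') * (f y z - f y' z) ≤ -lY * |y - y'| ^ 2)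
    (hfLz : ∀ y z z', |f y z - f y z'| ≤ L * ‖z - z'‖) {h M C : ℝ} (hh : 0 ≤ h) (hM : 0 ≤ M)
    (hcond : h * L * C ≤ 1) {Y₁ Y₀ : Ω → ℝ} {Z H : Ω → E}
    (hY₁ : Integrable Y₁ μ) (hY₁M : ∀ᵐ ω ∂μ, |Y₁ ω| ≤ M)
    (hH : Integrable H μ) (hHC : ∀ᵐ ω ∂μ, ‖H ω‖ ≤ C) (hH_mean : μ[H|m] =ᵐ[μ] 0)
    (hZ : Z =ᵐ[μ] μ[fun ω => Y₁ ω • H ω|m])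
    (hY₀ : Y₀ =ᵐ[μ] μ[fun ω => Y₁ ω + h * f (Y₀ ω) (Z ω)|m]) :
    ∀ᵐ ω ∂μ, |Y₀ ω| ≤ M := by
  by_cases hInt : Integrable (fun ω => Y₁ ω + h * f (Y₀ ω) (Z ω)) μ
  swap
  · rw [condExp_of_not_integrable hInt] at hY₀
    filter_upwards [hY₀] with ω hω
    simpa [hω] using hM
  have hY₁H : Integrable (fun ω => Y₁ ω • H ω) μ := hY₁.smul_bdd C hH.1 hHC
  obtain ⟨β, hβ, hβL, hrepr⟩ :=
    exists_implicit_step_eq_condExp_weighted_add hm hf hL hfLz hY₁ hY₁H hZ hInt hY₀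
  filter_upwards [hrepr, ae_abs_condExp_mul_one_add_inner_le hm hh hL hcond hβ hβL hH hHC hH_mean
    hY₁ hY₁M] with ω h1 h2
  exact abs_le_of_eq_add_mul_of_mul_nonpos h1 h2 hh (mul_apply_zero_nonpos hf0 hlY hfmy _)

end Step

theorem implicit_euler_numerically_stable_dim_one_general
    {Ω : Type*} [MeasurableSpace Ω] (μ : Measure Ω) [IsProbabilityMeasure μ]
    (n d : ℕ)
    -- the time grid
    (t : Fin (n + 1) → ℝ) (ht : StrictMono t)
    -- the maximal step size h
    (hstep : ℝ) (hstep_def : hstep = ⨆ i : Fin n, (t i.succ - t i.castSucc))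
    -- the discrete filtration
    (F : Fin (n + 1) → MeasurableSpace Ω)
    (hF_le : ∀ i, F i ≤ ‹MeasurableSpace Ω›)
    -- the H-coefficients
    (H : Fin n → Ω → EuclideanSpace ℝ (Fin d))
    (hH_bdd : ∀ i, MemLp (H i) ⊤ μ)
    (hH_mean : ∀ i, μ[H i|F i.castSucc] =ᵐ[μ] 0)
    -- the driver
    (f : ℝ → EuclideanSpace ℝ (Fin d) → ℝ)
    (hf_cont : Continuous fun p : ℝ × EuclideanSpace ℝ (Fin d) => f p.1 p.2)
    (hf0 : f 0 0 = 0)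
    (lY LZ : ℝ) (hlY : 0 ≤ lY) (hLZ : 0 ≤ LZ)
    -- (fmy): monotonicity in y
    (hfmy : ∀ (y y' : ℝ) (z : EuclideanSpace ℝ (Fin d)),
      (y - y') * (f y z - f y' z) ≤ -lY * |y - y'| ^ 2)
    -- (fLz): Lipschitz continuity in z
    (hfLz : ∀ (y : ℝ) (z z' : EuclideanSpace ℝ (Fin d)),
      |f y z - f y z'| ≤ LZ * ‖z - z'‖)
    -- the stability condition h · L^Z · max_i ‖|H_i|‖_∞ ≤ 1
    (hcond : hstep * LZ * (⨆ i : Fin n, (eLpNorm (H i) ⊤ μ).toReal) ≤ 1)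
    -- the terminal condition
    (ξ : Ω → ℝ)
    (hξ_bdd : MemLp ξ ⊤ μ)
    -- the scheme
    (Y : Fin (n + 1) → Ω → ℝ)
    (Z : Fin n → Ω → EuclideanSpace ℝ (Fin d))
    (hY_L2 : ∀ i, MemLp (Y i) 2 μ)
    (hY_final : Y (Fin.last n) =ᵐ[μ] ξ)
    (hZ_def : ∀ (i : Fin n) (l : Fin d),
      (fun ω => Z i ω l) =ᵐ[μ] μ[fun ω => Y i.succ ω * H i ω l|F i.castSucc])
    (hY_def : ∀ i : Fin n, Y i.castSucc =ᵐ[μ]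
      μ[fun ω => Y i.succ ω + (t i.succ - t i.castSucc) * f (Y i.castSucc ω) (Z i ω)|
        F i.castSucc]) :
    ∀ i : Fin (n + 1), ∀ᵐ ω ∂μ, |Y i ω| ≤ (eLpNorm ξ ⊤ μ).toReal := by
  have hstep_pos (i : Fin n) : 0 < t i.succ - t i.castSucc := sub_pos.mpr (ht i.castSucc_lt_succ)
  have hcond_step (i : Fin n) :
      (t i.succ - t i.castSucc) * LZ * (eLpNorm (H i) ⊤ μ).toReal ≤ 1 := by
    refine le_trans ?_ hcond
    rw [hstep_def]
    exact mul_mul_le_ciSup_mul_mul_ciSup (b := fun j => (eLpNorm (H j) ⊤ μ).toReal)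
      (fun j => (hstep_pos j).le) (fun _ => ENNReal.toReal_nonneg) hLZ i
  intro i
  induction i using Fin.reverseInduction with
  | last =>
    filter_upwards [hY_final, hξ_bdd.ae_norm_le_toReal_eLpNorm_top] with ω h1 h2
    rwa [h1, ← Real.norm_eq_abs]
  | cast i ih =>
    have hY₁ := (hY_L2 i.succ).integrable one_le_two
    have hZ := EuclideanSpace.ae_eq_condExp_of_forall_apply
      (hY₁.smul_of_top_left (hH_bdd i)) (hZ_def i)
    exact ae_abs_le_of_implicit_step (hF_le i.castSucc) hf_cont hf0 hlY hLZ hfmy hfLz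
      (hstep_pos i).le ENNReal.toReal_nonneg (hcond_step i) hY₁ ih
      ((hH_bdd i).integrable le_top) (hH_bdd i).ae_norm_le_toReal_eLpNorm_top (hH_mean i) hZ
      (hY_def i)

/-- Numerical stability of the implicit Euler scheme (θ = 1) for one-dimensional BSDEs
(`m = 1`): under monotonicity in `y` (constant `lY ≥ 0`), Lipschitz continuity in `z`
(constant `LZ`), essentially bounded `H`-coefficients and the condition
`h · L^Z · max_i ‖|H_i|‖_∞ ≤ 1`, the scheme started from an essentially bounded terminal
condition `ξ` satisfies `|Y_i| ≤ ‖ξ‖_∞` a.s. for every `i`. -/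
theorem implicit_euler_numerically_stable_dim_one
    {Ω : Type*} [MeasurableSpace Ω] (μ : Measure Ω) [IsProbabilityMeasure μ]
    (n d : ℕ) (hn : 1 ≤ n) (hd : 1 ≤ d)
    -- the time grid
    (t : Fin (n + 1) → ℝ) (ht0 : t 0 = 0) (ht : StrictMono t)
    -- the maximal step size h
    (hstep : ℝ) (hstep_def : hstep = ⨆ i : Fin n, (t i.succ - t i.castSucc))
    -- the discrete filtration
    (F : Fin (n + 1) → MeasurableSpace Ω)
    (hF_mono : Monotone F) (hF_le : ∀ i, F i ≤ ‹MeasurableSpace Ω›)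
    -- the H-coefficients
    (lam Lam : ℝ) (hlam : 0 < lam) (hLam : 0 < Lam)
    (c : Fin n → ℝ) (hc : ∀ i, lam / (d : ℝ) ≤ c i ∧ c i ≤ Lam / (d : ℝ))
    (H : Fin n → Ω → EuclideanSpace ℝ (Fin d))
    (hH_meas : ∀ i, Measurable[F i.succ] (H i))
    (hH_L2 : ∀ i, MemLp (H i) 2 μ)
    (hH_bdd : ∀ i, MemLp (H i) ⊤ μ)
    (hH_mean : ∀ i, μ[H i|F i.castSucc] =ᵐ[μ] 0)
    (hH_cov : ∀ (i : Fin n) (k l : Fin d),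
      (fun ω => (t i.succ - t i.castSucc) * (μ[fun ω' => H i ω' k * H i ω' l|F i.castSucc]) ω)
        =ᵐ[μ] fun _ => if k = l then c i else 0)
    -- the driver
    (f : ℝ → EuclideanSpace ℝ (Fin d) → ℝ)
    (hf_cont : Continuous fun p : ℝ × EuclideanSpace ℝ (Fin d) => f p.1 p.2)
    (hf0 : f 0 0 = 0)
    (lY LZ : ℝ) (hlY : 0 ≤ lY) (hLZ : 0 ≤ LZ)
    -- (fmy): monotonicity in y
    (hfmy : ∀ (y y' : ℝ) (z : EuclideanSpace ℝ (Fin d)),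
      (y - y') * (f y z - f y' z) ≤ -lY * |y - y'| ^ 2)
    -- (fLz): Lipschitz continuity in z
    (hfLz : ∀ (y : ℝ) (z z' : EuclideanSpace ℝ (Fin d)),
      |f y z - f y z'| ≤ LZ * ‖z - z'‖)
    -- the stability condition h · L^Z · max_i ‖|H_i|‖_∞ ≤ 1
    (hcond : hstep * LZ * (⨆ i : Fin n, (eLpNorm (H i) ⊤ μ).toReal) ≤ 1)
    -- the terminal condition
    (ξ : Ω → ℝ)
    (hξ_meas : Measurable[F (Fin.last n)] ξ) (hξ_bdd : MemLp ξ ⊤ μ)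
    -- the scheme
    (Y : Fin (n + 1) → Ω → ℝ)
    (Z : Fin n → Ω → EuclideanSpace ℝ (Fin d))
    (hY_L2 : ∀ i, MemLp (Y i) 2 μ) (hZ_L2 : ∀ i, MemLp (Z i) 2 μ)
    (hY_final : Y (Fin.last n) =ᵐ[μ] ξ)
    (hZ_def : ∀ (i : Fin n) (l : Fin d),
      (fun ω => Z i ω l) =ᵐ[μ] μ[fun ω => Y i.succ ω * H i ω l|F i.castSucc])
    (hY_def : ∀ i : Fin n, Y i.castSucc =ᵐ[μ]
      μ[fun ω => Y i.succ ω + (t i.succ - t i.castSucc) * f (Y i.castSucc ω) (Z i ω)|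
        F i.castSucc]) :
    ∀ i : Fin (n + 1), ∀ᵐ ω ∂μ, |Y i ω| ≤ (eLpNorm ξ ⊤ μ).toReal :=
  implicit_euler_numerically_stable_dim_one_general μ n d t ht hstep hstep_def F hF_le H hH_bdd
    hH_mean f hf_cont hf0 lY LZ hlY hLZ hfmy hfLz hcond ξ hξ_bdd Y Z hY_L2 hY_final hZ_def hY_def
end

section
/- Let d ≥ 1, a ≤ 0, b ∈ ℝ^d with b ≠ 0, h > 0, and set u := |b|_∞² h. Then the following are equivalent: (1) for every x ∈ [0,∞)^d, e^{−Σ_{ℓ=1}^d x_ℓ} · ( 1 + h (Σ_{ℓ=1}^d b_ℓ √x_ℓ)² ) ≤ (1 − a h)²; (2) either u ≤ 1, or u > 1 and (1 − a h)² − u · e^{1/u − 1} ≥ 0. This is the Von Neumann stability criterion of the implicit Euler scheme for the linear driver f(y,z) = a y + Σ_{ℓ=1}^d b_ℓ z^ℓ. -/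
/-- For `b ∈ ℝ^d`, `|b|_∞ := max(|b⁺|, |b⁻|)` where `b⁺ = (b₁ ∨ 0, …, b_d ∨ 0)`,
`b⁻ = (b₁ ∧ 0, …, b_d ∧ 0)` and `|·|` is the Euclidean norm. -/
noncomputable def bInfty {d : ℕ} (b : Fin d → ℝ) : ℝ :=
  max (Real.sqrt (∑ ℓ, max (b ℓ) 0 ^ 2)) (Real.sqrt (∑ ℓ, min (b ℓ) 0 ^ 2))

/-!
By Cauchy–Schwarz, on the slice `∑ x_ℓ = s` of the orthant the quantity `(∑ b_ℓ √x_ℓ)²` is at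
most `|b|_∞² s`, and this value is attained by taking `√x` proportional to `b⁺` or to `-b⁻`.
So the criterion reduces to the one-variable bound `e^{-s} (1 + u s) ≤ (1 - a h)²` for `s ≥ 0`.
Since `1 + y ≤ e^y`, the left side is at most `1` when `u ≤ 1`, and at most `u e^{1/u - 1}`,
with equality at `s = 1 - 1/u`, when `u > 1`.
-/

open Real Finset

section Scalar

variable {u : ℝ}

lemma exp_neg_mul_one_add_mul_le_one (hu : u ≤ 1) {s : ℝ} (hs : 0 ≤ s) :
    exp (-s) * (1 + u * s) ≤ 1 :=
  calc exp (-s) * (1 + u * s) ≤ exp (-s) * exp s := by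
        gcongr
        nlinarith [add_one_le_exp s]
    _ = 1 := by rw [← exp_add, neg_add_cancel, exp_zero]

lemma exp_neg_mul_one_add_mul_le (hu : 0 < u) (s : ℝ) :
    exp (-s) * (1 + u * s) ≤ u * exp (1 / u - 1) :=
  calc exp (-s) * (1 + u * s) = exp (-s) * (u * ((s + 1 / u - 1) + 1)) := by field_simp; ring
    _ ≤ exp (-s) * (u * exp (s + 1 / u - 1)) := by gcongr; exact add_one_le_exp _
    _ = u * exp (1 / u - 1) := by rw [mul_left_comm, ← exp_add]; ring_nf

lemma exp_neg_mul_one_add_mul_eq (hu : u ≠ 0) :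
    exp (-(1 - 1 / u)) * (1 + u * (1 - 1 / u)) = u * exp (1 / u - 1) := by
  rw [mul_comm, neg_sub]
  congr 1
  field_simp
  ring

theorem forall_exp_neg_mul_one_add_mul_le_iff {C : ℝ} (hC : 1 ≤ C) :
    (∀ s, 0 ≤ s → exp (-s) * (1 + u * s) ≤ C) ↔
      u ≤ 1 ∨ (1 < u ∧ u * exp (1 / u - 1) ≤ C) := by
  constructor
  · intro H
    refine (le_or_gt u 1).imp id fun hu => ⟨hu, ?_⟩
    have hs : 0 ≤ 1 - 1 / u := sub_nonneg.mpr ((div_le_one (by linarith)).mpr hu.le)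
    simpa only [exp_neg_mul_one_add_mul_eq (by linarith : 0 < u).ne'] using H _ hs
  · rintro (hu | ⟨hu, hcrit⟩) s hs
    · exact (exp_neg_mul_one_add_mul_le_one hu hs).trans hC
    · exact (exp_neg_mul_one_add_mul_le (by linarith) s).trans hcrit

end Scalar

section PositivePart

variable {ι : Type*} [Fintype ι]

lemma sum_max_neg_zero_sq (b : ι → ℝ) :
    ∑ i, max (-b i) 0 ^ 2 = ∑ i, min (b i) 0 ^ 2 := by
  refine sum_congr rfl fun i _ => ?_
  rcases le_total (b i) 0 with h | h <;> simp [h]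

lemma sum_mul_sqrt_le (c x : ι → ℝ) (hx : ∀ i, 0 ≤ x i) :
    ∑ i, c i * √(x i) ≤ √(∑ i, max (c i) 0 ^ 2) * √(∑ i, x i) :=
  calc ∑ i, c i * √(x i) ≤ ∑ i, max (c i) 0 * √(x i) := by
        gcongr with i
        exact le_max_left _ _
    _ ≤ √(∑ i, max (c i) 0 ^ 2) * √(∑ i, √(x i) ^ 2) := sum_mul_le_sqrt_mul_sqrt _ _ _
    _ = √(∑ i, max (c i) 0 ^ 2) * √(∑ i, x i) := by simp only [sq_sqrt (hx _)]

lemma exists_sq_sum_mul_sqrt_eq (b : ι → ℝ) (hb : 0 < ∑ i, max (b i) 0 ^ 2)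
    {s : ℝ} (hs : 0 ≤ s) :
    ∃ x : ι → ℝ, (∀ i, 0 ≤ x i) ∧ ∑ i, x i = s ∧
      (∑ i, b i * √(x i)) ^ 2 = (∑ i, max (b i) 0 ^ 2) * s := by
  set A := ∑ i, max (b i) 0 ^ 2 with hA
  have ht : 0 ≤ s / A := div_nonneg hs hb.le
  refine ⟨fun i => s / A * max (b i) 0 ^ 2, fun i => by positivity, ?_, ?_⟩
  · rw [← mul_sum, div_mul_cancel₀ _ hb.ne']
  · have hb_mul : ∀ i, b i * max (b i) 0 = max (b i) 0 ^ 2 := fun i => by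
      rcases le_total (b i) 0 with h | h <;> simp [h, sq]
    simp only [sqrt_mul ht, sqrt_sq (le_max_right _ _), mul_left_comm (b _), ← mul_sum,
      hb_mul, ← hA, mul_pow, sq_sqrt ht]
    field_simp

end PositivePart

section BInfty

variable {d : ℕ}

lemma bInfty_sq (b : Fin d → ℝ) :
    bInfty b ^ 2 = max (∑ ℓ, max (b ℓ) 0 ^ 2) (∑ ℓ, min (b ℓ) 0 ^ 2) := by
  rw [bInfty, ← sqrt_monotone.map_max, sq_sqrt]
  exact le_max_of_le_left (sum_nonneg fun ℓ _ => sq_nonneg _)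

lemma sq_sum_mul_sqrt_le (b x : Fin d → ℝ) (hx : ∀ ℓ, 0 ≤ x ℓ) :
    (∑ ℓ, b ℓ * √(x ℓ)) ^ 2 ≤ bInfty b ^ 2 * ∑ ℓ, x ℓ := by
  have hs : 0 ≤ ∑ ℓ, x ℓ := sum_nonneg fun ℓ _ => hx ℓ
  have hupper : ∑ ℓ, b ℓ * √(x ℓ) ≤ bInfty b * √(∑ ℓ, x ℓ) :=
    (sum_mul_sqrt_le b x hx).trans (by gcongr; exact le_max_left _ _)
  have hlower : ∑ ℓ, -b ℓ * √(x ℓ) ≤ bInfty b * √(∑ ℓ, x ℓ) := by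
    refine (sum_mul_sqrt_le (-b) x hx).trans ?_
    simp only [Pi.neg_apply, sum_max_neg_zero_sq]
    gcongr
    exact le_max_right _ _
  simp only [neg_mul, sum_neg_distrib] at hlower
  calc (∑ ℓ, b ℓ * √(x ℓ)) ^ 2 ≤ (bInfty b * √(∑ ℓ, x ℓ)) ^ 2 :=
        sq_le_sq' (by linarith) hupper
    _ = bInfty b ^ 2 * ∑ ℓ, x ℓ := by rw [mul_pow, sq_sqrt hs]

lemma exists_sq_sum_mul_sqrt_eq_bInfty_sq (b : Fin d → ℝ) (hb : bInfty b ≠ 0)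
    {s : ℝ} (hs : 0 ≤ s) :
    ∃ x : Fin d → ℝ, (∀ ℓ, 0 ≤ x ℓ) ∧ ∑ ℓ, x ℓ = s ∧
      (∑ ℓ, b ℓ * √(x ℓ)) ^ 2 = bInfty b ^ 2 * s := by
  have hpos : 0 < bInfty b ^ 2 := by positivity
  rw [bInfty_sq] at hpos ⊢
  rcases le_total (∑ ℓ, min (b ℓ) 0 ^ 2) (∑ ℓ, max (b ℓ) 0 ^ 2) with hle | hle
  · rw [max_eq_left hle] at hpos ⊢
    exact exists_sq_sum_mul_sqrt_eq b hpos hs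
  · rw [max_eq_right hle, ← sum_max_neg_zero_sq] at hpos ⊢
    obtain ⟨x, hx, hsum, hsq⟩ := exists_sq_sum_mul_sqrt_eq (-b) hpos hs
    refine ⟨x, hx, hsum, ?_⟩
    simpa only [Pi.neg_apply, neg_mul, sum_neg_distrib, neg_sq] using hsq

theorem forall_orthant_le_iff (b : Fin d → ℝ) {h : ℝ} (hh : 0 ≤ h) (C : ℝ) :
    (∀ x : Fin d → ℝ, (∀ ℓ, 0 ≤ x ℓ) →
        exp (-∑ ℓ, x ℓ) * (1 + h * (∑ ℓ, b ℓ * √(x ℓ)) ^ 2) ≤ C) ↔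
      ∀ s, 0 ≤ s → exp (-s) * (1 + bInfty b ^ 2 * h * s) ≤ C := by
  constructor
  · intro H s hs
    by_cases hb : bInfty b = 0
    · have hC := H 0 fun _ => le_rfl
      simp only [Pi.zero_apply, sqrt_zero, mul_zero, sum_const_zero, neg_zero, exp_zero] at hC
      simp only [hb]
      nlinarith [exp_le_one_iff.mpr (neg_nonpos.mpr hs)]
    · obtain ⟨x, hx, rfl, hsq⟩ := exists_sq_sum_mul_sqrt_eq_bInfty_sq b hb hs
      simpa only [hsq, mul_left_comm h, mul_assoc] using H x hx
  · intro H x hx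
    calc exp (-∑ ℓ, x ℓ) * (1 + h * (∑ ℓ, b ℓ * √(x ℓ)) ^ 2)
        ≤ exp (-∑ ℓ, x ℓ) * (1 + h * (bInfty b ^ 2 * ∑ ℓ, x ℓ)) := by
          gcongr
          exact sq_sum_mul_sqrt_le b x hx
      _ ≤ C := by
          rw [← mul_assoc, mul_comm h]
          exact H _ (sum_nonneg fun ℓ _ => hx ℓ)

end BInfty

theorem von_neumann_criterion_implicit_general (d : ℕ) (a : ℝ) (ha : a ≤ 0)
    (b : Fin d → ℝ) (h : ℝ) (hh : 0 < h) :
    (∀ x : Fin d → ℝ, (∀ ℓ, 0 ≤ x ℓ) →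
        Real.exp (-∑ ℓ, x ℓ) * (1 + h * (∑ ℓ, b ℓ * Real.sqrt (x ℓ)) ^ 2) ≤ (1 - a * h) ^ 2)
      ↔ (bInfty b ^ 2 * h ≤ 1 ∨
          (1 < bInfty b ^ 2 * h ∧
            0 ≤ (1 - a * h) ^ 2 -
              bInfty b ^ 2 * h * Real.exp (1 / (bInfty b ^ 2 * h) - 1))) := by
  have hC : 1 ≤ (1 - a * h) ^ 2 := one_le_pow₀ (by nlinarith)
  rw [forall_orthant_le_iff b hh.le, forall_exp_neg_mul_one_add_mul_le_iff hC]
  simp only [sub_nonneg]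

/-- Von Neumann stability criterion of the implicit Euler scheme for the linear driver
`f(y,z) = a y + Σ b_ℓ z^ℓ`: with `u := |b|_∞² h`, the inequality
`e^{-Σ x_ℓ} (1 + h (Σ b_ℓ √x_ℓ)²) ≤ (1 - a h)²` holds on the whole nonnegative orthant
if and only if `u ≤ 1`, or `u > 1` and `(1 - a h)² - u e^{1/u - 1} ≥ 0`. -/
theorem von_neumann_criterion_implicit (d : ℕ) (hd : 1 ≤ d) (a : ℝ) (ha : a ≤ 0)
    (b : Fin d → ℝ) (hb : b ≠ 0) (h : ℝ) (hh : 0 < h) :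
    (∀ x : Fin d → ℝ, (∀ ℓ, 0 ≤ x ℓ) →
        Real.exp (-∑ ℓ, x ℓ) * (1 + h * (∑ ℓ, b ℓ * Real.sqrt (x ℓ)) ^ 2) ≤ (1 - a * h) ^ 2)
      ↔ (bInfty b ^ 2 * h ≤ 1 ∨
          (1 < bInfty b ^ 2 * h ∧
            0 ≤ (1 - a * h) ^ 2 -
              bInfty b ^ 2 * h * Real.exp (1 / (bInfty b ^ 2 * h) - 1))) :=
  von_neumann_criterion_implicit_general d a ha b h hh
end
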